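/- For any 2×2 Hermitian observables A₀, A₁, B₀, B₁ on ℂ²⊗ℂ² with A_x² = I and B_y² = I, and any two-qubit density matrix ρ of the form Ω_α, the CHSH value Tr((A₀⊗B₀ + A₀⊗B₁ + A₁⊗B₀ - A₁⊗B₁)·Ω_α) is at most 2√(1+α²). -/
import Mathlib


open Matrix Kronecker

/-- The Bell state |Φ⁺⟩ = (|00⟩ + |11⟩)/√2. -/
noncomputable def phiPlus : (Fin 2 × Fin 2) → ℂ :=
  fun p => if p.1 = p.2 then ((1 / Real.sqrt 2 : ℝ) : ℂ) else 0

/-- The Bell state |Φ⁻⟩ = (|00⟩ - |11⟩)/√2. -/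
noncomputable def phiMinus : (Fin 2 × Fin 2) → ℂ :=
  fun p => if p = (0, 0) then ((1 / Real.sqrt 2 : ℝ) : ℂ)
           else if p = (1, 1) then -((1 / Real.sqrt 2 : ℝ) : ℂ) else 0

/-- Rank-one projector |v⟩⟨v|. -/
noncomputable def projOf (v : (Fin 2 × Fin 2) → ℂ) :
    Matrix (Fin 2 × Fin 2) (Fin 2 × Fin 2) ℂ :=
  Matrix.vecMulVec v (star v)

/-- Ω_α = ((1+α)/2)|Φ⁺⟩⟨Φ⁺| + ((1-α)/2)|Φ⁻⟩⟨Φ⁻|. -/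
noncomputable def OmegaState (α : ℝ) : Matrix (Fin 2 × Fin 2) (Fin 2 × Fin 2) ℂ :=
  (((1 + α) / 2 : ℝ) : ℂ) • projOf phiPlus + (((1 - α) / 2 : ℝ) : ℂ) • projOf phiMinus

/-! ### Auxiliary real-analysis lemmas -/

lemma aux_le_sqrt_of_sq_le {t s : ℝ} (h : t^2 ≤ s) : t ≤ Real.sqrt s := by
  calc t ≤ |t| := le_abs_self t
  _ = Real.sqrt (t^2) := (Real.sqrt_sq_eq_abs t).symm
  _ ≤ Real.sqrt s := Real.sqrt_le_sqrt h

lemma aux_cs3 (x y z u v w : ℝ) :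
    x*u + y*v + z*w ≤ Real.sqrt ((x^2+y^2+z^2) * (u^2+v^2+w^2)) := by
  apply aux_le_sqrt_of_sq_le
  nlinarith [sq_nonneg (x*v - y*u), sq_nonneg (x*w - z*u), sq_nonneg (y*w - z*v)]

lemma aux_sqrt_le_one {x : ℝ} (h : x ≤ 1) : Real.sqrt x ≤ 1 := by
  rw [show (1:ℝ) = Real.sqrt 1 by simp]
  exact Real.sqrt_le_sqrt h

lemma aux_abs_div_two_le_one {X : ℝ} (h1 : -2 ≤ X) (h2 : X ≤ 2) : |X|/2 ≤ 1 := by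
  have : |X| ≤ 2 := abs_le.mpr ⟨h1, h2⟩
  linarith

lemma aux_one_le_sqrt_one_add_sq (α : ℝ) : (1:ℝ) ≤ Real.sqrt (1 + α^2) :=
  aux_le_sqrt_of_sq_le (by nlinarith)

lemma aux_corePoly (β c c' s : ℝ) (hβ0 : 0 ≤ β) (hβ1 : β ≤ 1)
    (hs : s^2 ≤ (1-c^2)*(1-c'^2)) :
    ((c+c')^2 + β*(2-c^2-c'^2+2*s)) * ((c-c')^2 + β*(2-c^2-c'^2-2*s))
      ≤ (2-(1-β)*(c^2+c'^2))^2 := by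
  nlinarith [sq_nonneg (β*c*c' + s),
    mul_nonneg (by nlinarith : (0:ℝ) ≤ 1 - β^2) (by linarith : (0:ℝ) ≤ (1-c^2)*(1-c'^2) - s^2)]

/-- The Horodecki-type core estimate for two unit "Bloch" vectors. -/
lemma aux_core (α c g h c' g' h' : ℝ) (hα0 : 0 ≤ α) (hα1 : α ≤ 1)
    (h1 : c^2+g^2+h^2 = 1) (h2 : c'^2+g'^2+h'^2 = 1) :
    Real.sqrt ((c+c')^2 + α^2*((g+g')^2+(h+h')^2))
      + Real.sqrt ((c-c')^2 + α^2*((g-g')^2+(h-h')^2))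
      ≤ 2 * Real.sqrt (1 + α^2) := by
  have eQp : (c+c')^2 + α^2*((g+g')^2+(h+h')^2)
      = (c+c')^2 + α^2*(2-c^2-c'^2+2*(g*g'+h*h')) := by
    linear_combination (α^2) * h1 + (α^2) * h2
  have eQm : (c-c')^2 + α^2*((g-g')^2+(h-h')^2)
      = (c-c')^2 + α^2*(2-c^2-c'^2-2*(g*g'+h*h')) := by
    linear_combination (α^2) * h1 + (α^2) * h2
  rw [eQp, eQm]
  set s := g*g' + h*h' with hsdef
  set Qp := (c+c')^2 + α^2*(2-c^2-c'^2+2*s) with hQp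
  set Qm := (c-c')^2 + α^2*(2-c^2-c'^2-2*s) with hQm
  have hc1 : c^2 ≤ 1 := by nlinarith [sq_nonneg g, sq_nonneg h]
  have hc1' : c'^2 ≤ 1 := by nlinarith [sq_nonneg g', sq_nonneg h']
  have hcs : s^2 ≤ (1-c^2)*(1-c'^2) := by
    rw [hsdef]
    have : (g*g'+h*h')^2 ≤ (g^2+h^2)*(g'^2+h'^2) := by nlinarith [sq_nonneg (g*h'-h*g')]
    calc (g*g'+h*h')^2 ≤ (g^2+h^2)*(g'^2+h'^2) := this
    _ = (1-c^2)*(1-c'^2) := by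
        rw [show g^2+h^2 = 1-c^2 by linarith, show g'^2+h'^2 = 1-c'^2 by linarith]
  have hQpn : 0 ≤ Qp := by
    rw [← eQp]; positivity
  have hQmn : 0 ≤ Qm := by
    rw [← eQm]; positivity
  have hrhs0 : 0 ≤ 2 - (1-α^2)*(c^2+c'^2) := by nlinarith
  have hprod : Qp * Qm ≤ (2 - (1-α^2)*(c^2+c'^2))^2 :=
    aux_corePoly (α^2) c c' s (by positivity) (by nlinarith) hcs
  have hsum : Qp + Qm = 4*α^2 + 2*(1-α^2)*(c^2+c'^2) := by rw [hQp, hQm]; ring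
  clear_value Qp Qm s
  have hsqrtprod : Real.sqrt Qp * Real.sqrt Qm ≤ 2 - (1-α^2)*(c^2+c'^2) := by
    rw [← Real.sqrt_mul hQpn]
    calc Real.sqrt (Qp*Qm) ≤ Real.sqrt ((2 - (1-α^2)*(c^2+c'^2))^2) := Real.sqrt_le_sqrt hprod
    _ = |2 - (1-α^2)*(c^2+c'^2)| := Real.sqrt_sq_eq_abs _
    _ = 2 - (1-α^2)*(c^2+c'^2) := abs_of_nonneg hrhs0
  have key : (Real.sqrt Qp + Real.sqrt Qm)^2 ≤ 4*(1+α^2) := by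
    have e1 : Real.sqrt Qp ^ 2 = Qp := Real.sq_sqrt hQpn
    have e2 : Real.sqrt Qm ^ 2 = Qm := Real.sq_sqrt hQmn
    have expand : (Real.sqrt Qp + Real.sqrt Qm)^2
        = Real.sqrt Qp ^ 2 + Real.sqrt Qm ^ 2 + 2*(Real.sqrt Qp * Real.sqrt Qm) := by ring
    rw [expand, e1, e2]
    linarith
  calc Real.sqrt Qp + Real.sqrt Qm = Real.sqrt ((Real.sqrt Qp + Real.sqrt Qm)^2) := by
        rw [Real.sqrt_sq (by positivity)]
  _ ≤ Real.sqrt (4*(1+α^2)) := Real.sqrt_le_sqrt key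
  _ = 2 * Real.sqrt (1+α^2) := by
        rw [show (4:ℝ)*(1+α^2) = 2^2*(1+α^2) by ring, Real.sqrt_mul (by positivity),
          Real.sqrt_sq (by norm_num)]

/-- single-party bound: contribution of observable (a,d,e,f) against sums (P,S,G,H). -/
lemma aux_groupBound (α a d e f P S G H : ℝ) (hα : 0 ≤ α)
    (h1 : a^2+e^2+f^2 = 1) (h2 : d^2+e^2+f^2 = 1)
    (h3 : e*(a+d) = 0) (h4 : f*(a+d) = 0) :
    (a*P+d*S)/2 + α*(e*G - f*H)
      ≤ max (|P+S|/2) (Real.sqrt (((P-S)/2)^2 + α^2*(G^2+H^2))) := by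
  by_cases had : a + d = 0
  · have hd : d = -a := by linarith
    have hb : (a*P+d*S)/2 + α*(e*G - f*H)
        = a*((P-S)/2) + e*(α*G) + f*(-(α*H)) := by rw [hd]; ring
    rw [hb]
    refine le_trans (aux_cs3 a e f ((P-S)/2) (α*G) (-(α*H))) (le_trans ?_ (le_max_right _ _))
    rw [h1, one_mul]
    apply Real.sqrt_le_sqrt
    nlinarith [sq_nonneg (α*G), sq_nonneg (α*H)]
  · have he : e = 0 := by rcases mul_eq_zero.mp h3 with h | h; exact h; exact absurd h had
    have hf : f = 0 := by rcases mul_eq_zero.mp h4 with h | h; exact h; exact absurd h had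
    subst he hf
    have ha : a = 1 ∨ a = -1 := by
      have : (a-1)*(a+1) = 0 := by nlinarith
      rcases mul_eq_zero.mp this with h | h
      · left; linarith
      · right; linarith
    have hdd : d = 1 ∨ d = -1 := by
      have : (d-1)*(d+1) = 0 := by nlinarith
      rcases mul_eq_zero.mp this with h | h
      · left; linarith
      · right; linarith
    have hsq : |(P-S)/2| ≤ Real.sqrt (((P-S)/2)^2 + α^2*(G^2+H^2)) := by
      apply aux_le_sqrt_of_sq_le
      rw [sq_abs]
      nlinarith [sq_nonneg (α*G), sq_nonneg (α*H)]
    have m1 : |P+S|/2 ≤ max (|P+S|/2) (Real.sqrt (((P-S)/2)^2 + α^2*(G^2+H^2))) :=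
      le_max_left _ _
    have m2 : |(P-S)/2| ≤ max (|P+S|/2) (Real.sqrt (((P-S)/2)^2 + α^2*(G^2+H^2))) :=
      le_trans hsq (le_max_right _ _)
    rcases ha with rfl | rfl <;> rcases hdd with rfl | rfl <;>
      linarith [le_abs_self (P+S), neg_abs_le (P+S), le_abs_self ((P-S)/2),
        neg_abs_le ((P-S)/2), abs_nonneg (P+S)]

set_option maxHeartbeats 1000000 in
lemma aux_bside (α p s g h p' s' g' h' : ℝ) (hα0 : 0 ≤ α) (hα1 : α ≤ 1)
    (b1 : p^2+g^2+h^2 = 1) (b2 : s^2+g^2+h^2 = 1) (b3 : g*(p+s) = 0) (b4 : h*(p+s) = 0)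
    (b1' : p'^2+g'^2+h'^2 = 1) (b2' : s'^2+g'^2+h'^2 = 1)
    (b3' : g'*(p'+s') = 0) (b4' : h'*(p'+s') = 0) :
    max (|(p+p')+(s+s')|/2)
        (Real.sqrt ((((p+p')-(s+s'))/2)^2 + α^2*((g+g')^2+(h+h')^2)))
    + max (|(p-p')+(s-s')|/2)
        (Real.sqrt ((((p-p')-(s-s'))/2)^2 + α^2*((g-g')^2+(h-h')^2)))
    ≤ 2 * Real.sqrt (1+α^2) := by
  have hone := aux_one_le_sqrt_one_add_sq α
  by_cases hps : p + s = 0 <;> by_cases hps' : p' + s' = 0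
  · -- both traceless: Horodecki core
    have key := aux_core α p g h p' g' h' hα0 hα1 b1 b1'
    have t1 : max (|(p+p')+(s+s')|/2)
        (Real.sqrt ((((p+p')-(s+s'))/2)^2 + α^2*((g+g')^2+(h+h')^2)))
        ≤ Real.sqrt ((p+p')^2 + α^2*((g+g')^2+(h+h')^2)) := by
      apply max_le
      · rw [show (p+p')+(s+s') = 0 by linarith]
        simpa using Real.sqrt_nonneg ((p+p')^2 + α^2*((g+g')^2+(h+h')^2))
      · rw [show ((p+p')-(s+s'))/2 = p+p' by linarith]
    have t2 : max (|(p-p')+(s-s')|/2)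
        (Real.sqrt ((((p-p')-(s-s'))/2)^2 + α^2*((g-g')^2+(h-h')^2)))
        ≤ Real.sqrt ((p-p')^2 + α^2*((g-g')^2+(h-h')^2)) := by
      apply max_le
      · rw [show (p-p')+(s-s') = 0 by linarith]
        simpa using Real.sqrt_nonneg ((p-p')^2 + α^2*((g-g')^2+(h-h')^2))
      · rw [show ((p-p')-(s-s'))/2 = p-p' by linarith]
    linarith
  · -- p+s = 0, second observable is ±I
    have hg' : g' = 0 := (mul_eq_zero.mp b3').resolve_right hps'
    have hh' : h' = 0 := (mul_eq_zero.mp b4').resolve_right hps'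
    have hsp' : s' = p' := by
      have hz : (p'-s')*(p'+s') = 0 := by linear_combination b1' - b2'
      rcases mul_eq_zero.mp hz with hz | hz
      · linarith
      · exact absurd hz hps'
    have hp1' : p'^2 = 1 := by nlinarith
    have hb : -1 ≤ p' ∧ p' ≤ 1 := by
      constructor <;> nlinarith [sq_nonneg (p'+1), sq_nonneg (p'-1)]
    have h1α : (0:ℝ) ≤ 1 - α^2 := by nlinarith
    have t1 : max (|(p+p')+(s+s')|/2)
        (Real.sqrt ((((p+p')-(s+s'))/2)^2 + α^2*((g+g')^2+(h+h')^2))) ≤ 1 := by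
      apply max_le
      · exact aux_abs_div_two_le_one (by linarith) (by linarith)
      · apply aux_sqrt_le_one
        rw [show ((p+p')-(s+s'))/2 = p by linarith, hg', hh']
        nlinarith [mul_nonneg h1α (by positivity : (0:ℝ) ≤ g^2+h^2)]
    have t2 : max (|(p-p')+(s-s')|/2)
        (Real.sqrt ((((p-p')-(s-s'))/2)^2 + α^2*((g-g')^2+(h-h')^2))) ≤ 1 := by
      apply max_le
      · exact aux_abs_div_two_le_one (by linarith) (by linarith)
      · apply aux_sqrt_le_one
        rw [show ((p-p')-(s-s'))/2 = p by linarith, hg', hh']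
        nlinarith [mul_nonneg h1α (by positivity : (0:ℝ) ≤ g^2+h^2)]
    linarith
  · -- first observable ±I, second traceless
    have hg : g = 0 := (mul_eq_zero.mp b3).resolve_right hps
    have hh : h = 0 := (mul_eq_zero.mp b4).resolve_right hps
    have hsp : s = p := by
      have hz : (p-s)*(p+s) = 0 := by linear_combination b1 - b2
      rcases mul_eq_zero.mp hz with hz | hz
      · linarith
      · exact absurd hz hps
    have hp1 : p^2 = 1 := by nlinarith
    have hb : -1 ≤ p ∧ p ≤ 1 := by
      constructor <;> nlinarith [sq_nonneg (p+1), sq_nonneg (p-1)]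
    have h1α : (0:ℝ) ≤ 1 - α^2 := by nlinarith
    have t1 : max (|(p+p')+(s+s')|/2)
        (Real.sqrt ((((p+p')-(s+s'))/2)^2 + α^2*((g+g')^2+(h+h')^2))) ≤ 1 := by
      apply max_le
      · exact aux_abs_div_two_le_one (by linarith) (by linarith)
      · apply aux_sqrt_le_one
        rw [show ((p+p')-(s+s'))/2 = p' by linarith, hg, hh]
        nlinarith [mul_nonneg h1α (by positivity : (0:ℝ) ≤ g'^2+h'^2)]
    have t2 : max (|(p-p')+(s-s')|/2)
        (Real.sqrt ((((p-p')-(s-s'))/2)^2 + α^2*((g-g')^2+(h-h')^2))) ≤ 1 := by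
      apply max_le
      · exact aux_abs_div_two_le_one (by linarith) (by linarith)
      · apply aux_sqrt_le_one
        rw [show ((p-p')-(s-s'))/2 = -p' by linarith, hg, hh]
        nlinarith [mul_nonneg h1α (by positivity : (0:ℝ) ≤ g'^2+h'^2)]
    linarith
  · -- both ±I
    have hg : g = 0 := (mul_eq_zero.mp b3).resolve_right hps
    have hh : h = 0 := (mul_eq_zero.mp b4).resolve_right hps
    have hg' : g' = 0 := (mul_eq_zero.mp b3').resolve_right hps'
    have hh' : h' = 0 := (mul_eq_zero.mp b4').resolve_right hps'
    have hsp : s = p := by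
      have hz : (p-s)*(p+s) = 0 := by linear_combination b1 - b2
      rcases mul_eq_zero.mp hz with hz | hz
      · linarith
      · exact absurd hz hps
    have hsp' : s' = p' := by
      have hz : (p'-s')*(p'+s') = 0 := by linear_combination b1' - b2'
      rcases mul_eq_zero.mp hz with hz | hz
      · linarith
      · exact absurd hz hps'
    have hp1 : p^2 = 1 := by nlinarith
    have hp1' : p'^2 = 1 := by nlinarith
    have hcross : |p+p'| + |p-p'| = 2 := by
      have hp : p = 1 ∨ p = -1 := by
        rcases mul_eq_zero.mp (show (p-1)*(p+1) = 0 by nlinarith) with hz | hz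
        · left; linarith
        · right; linarith
      have hp' : p' = 1 ∨ p' = -1 := by
        rcases mul_eq_zero.mp (show (p'-1)*(p'+1) = 0 by nlinarith) with hz | hz
        · left; linarith
        · right; linarith
      rcases hp with rfl | rfl <;> rcases hp' with rfl | rfl <;> norm_num
    have t1 : max (|(p+p')+(s+s')|/2)
        (Real.sqrt ((((p+p')-(s+s'))/2)^2 + α^2*((g+g')^2+(h+h')^2))) ≤ |p+p'| := by
      apply max_le
      · rw [show (p+p')+(s+s') = 2*(p+p') by linarith, abs_mul]
        rw [show |(2:ℝ)| = 2 by norm_num]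
        linarith [abs_nonneg (p+p')]
      · rw [show ((p+p')-(s+s'))/2 = 0 by linarith, hg, hh, hg', hh']
        norm_num
    have t2 : max (|(p-p')+(s-s')|/2)
        (Real.sqrt ((((p-p')-(s-s'))/2)^2 + α^2*((g-g')^2+(h-h')^2))) ≤ |p-p'| := by
      apply max_le
      · rw [show (p-p')+(s-s') = 2*(p-p') by linarith, abs_mul]
        rw [show |(2:ℝ)| = 2 by norm_num]
        linarith [abs_nonneg (p-p')]
      · rw [show ((p-p')-(s-s'))/2 = 0 by linarith, hg, hh, hg', hh']
        norm_num
    linarith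

/-- The complete real CHSH inequality. -/
lemma aux_mainReal (α a d e f a' d' e' f' p s g h p' s' g' h' : ℝ)
    (hα0 : 0 ≤ α) (hα1 : α ≤ 1)
    (a1 : a^2+e^2+f^2 = 1) (a2 : d^2+e^2+f^2 = 1) (a3 : e*(a+d) = 0) (a4 : f*(a+d) = 0)
    (a1' : a'^2+e'^2+f'^2 = 1) (a2' : d'^2+e'^2+f'^2 = 1)
    (a3' : e'*(a'+d') = 0) (a4' : f'*(a'+d') = 0)
    (b1 : p^2+g^2+h^2 = 1) (b2 : s^2+g^2+h^2 = 1) (b3 : g*(p+s) = 0) (b4 : h*(p+s) = 0)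
    (b1' : p'^2+g'^2+h'^2 = 1) (b2' : s'^2+g'^2+h'^2 = 1)
    (b3' : g'*(p'+s') = 0) (b4' : h'*(p'+s') = 0) :
    ((a*p+d*s)/2 + α*(e*g - f*h)) + ((a*p'+d*s')/2 + α*(e*g' - f*h'))
      + ((a'*p+d'*s)/2 + α*(e'*g - f'*h)) - ((a'*p'+d'*s')/2 + α*(e'*g' - f'*h'))
      ≤ 2 * Real.sqrt (1+α^2) := by
  have G1 := aux_groupBound α a d e f (p+p') (s+s') (g+g') (h+h') hα0 a1 a2 a3 a4
  have G2 := aux_groupBound α a' d' e' f' (p-p') (s-s') (g-g') (h-h') hα0 a1' a2' a3' a4'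
  have BB := aux_bside α p s g h p' s' g' h' hα0 hα1 b1 b2 b3 b4 b1' b2' b3' b4'
  have hre : ((a*p+d*s)/2 + α*(e*g - f*h)) + ((a*p'+d*s')/2 + α*(e*g' - f*h'))
      + ((a'*p+d'*s)/2 + α*(e'*g - f'*h)) - ((a'*p'+d'*s')/2 + α*(e'*g' - f'*h'))
      = ((a*(p+p')+d*(s+s'))/2 + α*(e*(g+g') - f*(h+h')))
        + ((a'*(p-p')+d'*(s-s'))/2 + α*(e'*(g-g') - f'*(h-h'))) := by ring
  rw [hre]
  linarith

/-- Entrywise constraints from Hermiticity together with `A * A = 1`. -/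
lemma aux_constraints (A : Matrix (Fin 2) (Fin 2) ℂ)
    (hA : A.IsHermitian) (hsq : A * A = 1) :
    ((A 0 0).re)^2 + ((A 0 1).re)^2 + ((A 0 1).im)^2 = 1 ∧
    ((A 1 1).re)^2 + ((A 0 1).re)^2 + ((A 0 1).im)^2 = 1 ∧
    (A 0 1).re * ((A 0 0).re + (A 1 1).re) = 0 ∧
    (A 0 1).im * ((A 0 0).re + (A 1 1).re) = 0 := by
  have hm00 := congrFun (congrFun hA 0) 0
  have hm11 := congrFun (congrFun hA 1) 1
  have hm10 := congrFun (congrFun hA 0) 1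
  simp [Matrix.conjTranspose_apply, Complex.ext_iff] at hm00 hm11 hm10
  have s00 := congrFun (congrFun hsq 0) 0
  have s11 := congrFun (congrFun hsq 1) 1
  have s01 := congrFun (congrFun hsq 0) 1
  simp [Matrix.mul_apply, Fin.sum_univ_two, Matrix.one_apply, Complex.ext_iff,
    Complex.add_re, Complex.mul_re, Complex.add_im, Complex.mul_im] at s00 s11 s01
  obtain ⟨s00re, s00im⟩ := s00
  obtain ⟨s11re, s11im⟩ := s11
  obtain ⟨s01re, s01im⟩ := s01
  have him00 : (A 0 0).im = 0 := by linarith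
  have him11 : (A 1 1).im = 0 := by linarith
  have h10re : (A 1 0).re = (A 0 1).re := hm10.1
  have h10im : (A 1 0).im = -(A 0 1).im := by linarith [hm10.2]
  simp only [him00, him11, h10re, h10im] at s00re s11re s01re s01im
  refine ⟨by linear_combination s00re, by linear_combination s11re,
    by linear_combination s01re, by linear_combination s01im⟩

lemma aux_traceFormula (α : ℝ) (A B : Matrix (Fin 2) (Fin 2) ℂ) :
    Matrix.trace ((A ⊗ₖ B) * OmegaState α) =
      (1/2 : ℂ) * (A 0 0 * B 0 0 + A 1 1 * B 1 1)
      + ((α : ℂ)/2) * (A 0 1 * B 0 1 + A 1 0 * B 1 0) := by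
  simp only [Matrix.trace, Matrix.diag, Matrix.mul_apply, Fintype.sum_prod_type,
    Fin.sum_univ_two, OmegaState, projOf, phiPlus, phiMinus, Matrix.vecMulVec_apply,
    Matrix.add_apply, Matrix.smul_apply, Matrix.kroneckerMap_apply, Pi.star_apply]
  norm_num
  have h3 : ((Real.sqrt 2 : ℝ) : ℂ)⁻¹ ^ 2 = 1/2 := by
    rw [inv_pow]
    norm_cast
    rw [Real.sq_sqrt] <;> norm_num
  ring_nf
  rw [h3]
  ring

lemma aux_traceRe (α : ℝ) (A B : Matrix (Fin 2) (Fin 2) ℂ)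
    (hA : A.IsHermitian) (hB : B.IsHermitian) :
    (Matrix.trace ((A ⊗ₖ B) * OmegaState α)).re
      = ((A 0 0).re * (B 0 0).re + (A 1 1).re * (B 1 1).re)/2
        + α * ((A 0 1).re * (B 0 1).re - (A 0 1).im * (B 0 1).im) := by
  have hmA := congrFun (congrFun hA 0) 1
  have hmB := congrFun (congrFun hB 0) 1
  simp [Matrix.conjTranspose_apply, Complex.ext_iff] at hmA hmB
  have hmA00 := congrFun (congrFun hA 0) 0
  have hmB00 := congrFun (congrFun hB 0) 0
  have hmA11 := congrFun (congrFun hA 1) 1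
  have hmB11 := congrFun (congrFun hB 1) 1
  simp [Matrix.conjTranspose_apply, Complex.ext_iff] at hmA00 hmB00 hmA11 hmB11
  rw [aux_traceFormula]
  simp only [Complex.add_re, Complex.mul_re, Complex.mul_im, Complex.add_im,
    Complex.div_re, Complex.div_im, Complex.one_re, Complex.one_im,
    Complex.ofReal_re, Complex.ofReal_im]
  rw [hmA.1, hmB.1, show (A 1 0).im = -(A 0 1).im by linarith [hmA.2],
    show (B 1 0).im = -(B 0 1).im by linarith [hmB.2],
    show (A 0 0).im = 0 by linarith [hmA00], show (B 0 0).im = 0 by linarith [hmB00],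
    show (A 1 1).im = 0 by linarith [hmA11], show (B 1 1).im = 0 by linarith [hmB11]]
  norm_num
  ring

theorem stmt_14 (α : ℝ) (hα : α ∈ Set.Icc (0 : ℝ) 1)
    (A₀ A₁ B₀ B₁ : Matrix (Fin 2) (Fin 2) ℂ)
    (hA₀ : A₀.IsHermitian) (hA₁ : A₁.IsHermitian)
    (hB₀ : B₀.IsHermitian) (hB₁ : B₁.IsHermitian)
    (hA₀sq : A₀ * A₀ = 1) (hA₁sq : A₁ * A₁ = 1)
    (hB₀sq : B₀ * B₀ = 1) (hB₁sq : B₁ * B₁ = 1) :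
    (Matrix.trace ((A₀ ⊗ₖ B₀ + A₀ ⊗ₖ B₁ + A₁ ⊗ₖ B₀ - A₁ ⊗ₖ B₁) * OmegaState α)).re
      ≤ 2 * Real.sqrt (1 + α ^ 2) := by
  obtain ⟨hα0, hα1⟩ := hα
  have hsplit : Matrix.trace ((A₀ ⊗ₖ B₀ + A₀ ⊗ₖ B₁ + A₁ ⊗ₖ B₀ - A₁ ⊗ₖ B₁) * OmegaState α)
      = Matrix.trace ((A₀ ⊗ₖ B₀) * OmegaState α) + Matrix.trace ((A₀ ⊗ₖ B₁) * OmegaState α)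
        + Matrix.trace ((A₁ ⊗ₖ B₀) * OmegaState α) - Matrix.trace ((A₁ ⊗ₖ B₁) * OmegaState α) := by
    rw [Matrix.sub_mul, Matrix.add_mul, Matrix.add_mul, Matrix.trace_sub, Matrix.trace_add,
      Matrix.trace_add]
  rw [hsplit, Complex.sub_re, Complex.add_re, Complex.add_re,
    aux_traceRe α A₀ B₀ hA₀ hB₀, aux_traceRe α A₀ B₁ hA₀ hB₁,
    aux_traceRe α A₁ B₀ hA₁ hB₀, aux_traceRe α A₁ B₁ hA₁ hB₁]
  obtain ⟨cA1, cA2, cA3, cA4⟩ := aux_constraints A₀ hA₀ hA₀sq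
  obtain ⟨cA1', cA2', cA3', cA4'⟩ := aux_constraints A₁ hA₁ hA₁sq
  obtain ⟨cB1, cB2, cB3, cB4⟩ := aux_constraints B₀ hB₀ hB₀sq
  obtain ⟨cB1', cB2', cB3', cB4'⟩ := aux_constraints B₁ hB₁ hB₁sq
  have key := aux_mainReal α
    ((A₀ 0 0).re) ((A₀ 1 1).re) ((A₀ 0 1).re) ((A₀ 0 1).im)
    ((A₁ 0 0).re) ((A₁ 1 1).re) ((A₁ 0 1).re) ((A₁ 0 1).im)
    ((B₀ 0 0).re) ((B₀ 1 1).re) ((B₀ 0 1).re) ((B₀ 0 1).im)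
    ((B₁ 0 0).re) ((B₁ 1 1).re) ((B₁ 0 1).re) ((B₁ 0 1).im)
    hα0 hα1 cA1 cA2 cA3 cA4 cA1' cA2' cA3' cA4' cB1 cB2 cB3 cB4 cB1' cB2' cB3' cB4'
  linarith
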